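/- Let ν > 1 and 1/ν + 1/ν² < F < 2. Then (−ν−1+√(8F²ν⁴+ν²+2ν+1))/(2ν²(ν+1)) > F√(ν²+ν+1)/(√6·ν(ν+1)). Equivalently, H_* > H_c, where H_* := (−ν−1+√(8F²ν⁴+ν²+2ν+1))/(2ν²(ν+1)) and H_c := F√(ν²+ν+1)/(√6·ν(ν+1)). -/

import Mathlib

/-!
`H_*` is the larger root of `q(H) = ν²(ν+1)H² + (ν+1)H - 2F²ν²/(ν+1)`, whose discriminant
is `8F²ν⁴ + (ν+1)²`, so `H_c < H_*` as soon as `q(H_c) < 0`. Since `(ν+1)H_c²` is a rational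
function of `F` and `ν`, this reduces to the single irrational inequality
`√6 (ν+1) √(ν²+ν+1) < νF(11ν²-ν-1)`, which after squaring follows from `Fν² > ν+1`,
the lower bound on `F` in disguise.
-/

open Real

theorem lt_quadratic_root_of_neg {a b c x : ℝ} (ha : 0 < a) (h : a * x ^ 2 + b * x + c < 0) :
    x < (-b + √(discrim a b c)) / (2 * a) := by
  have hsq : (2 * a * x + b) ^ 2 < discrim a b c := by
    rw [discrim]; nlinarith
  rw [lt_div_iff₀ (by positivity)]
  linarith [lt_sqrt_of_sq_lt hsq]

theorem six_mul_sq_mul_le_sq {ν : ℝ} (hν : 1 ≤ ν) :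
    6 * ν ^ 2 * (ν ^ 2 + ν + 1) ≤ (11 * ν ^ 2 - ν - 1) ^ 2 := by
  nlinarith [pow_le_pow_left₀ zero_le_one hν 2, pow_le_pow_left₀ zero_le_one hν 3,
    mul_le_mul_of_nonneg_left hν (by positivity : (0 : ℝ) ≤ ν ^ 3)]

theorem sqrt_six_mul_lt {F ν : ℝ} (hν : 1 < ν) (hF : ν + 1 < F * ν ^ 2) :
    √6 * (ν + 1) * √(ν ^ 2 + ν + 1) < ν * F * (11 * ν ^ 2 - ν - 1) := by
  have hν0 : 0 < ν := by linarith
  have hFν : 0 < F * ν ^ 2 := by linarith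
  have hFsq : (ν + 1) ^ 2 < (F * ν ^ 2) ^ 2 := by gcongr
  have ha : 0 < 11 * ν ^ 2 - ν - 1 := by nlinarith
  have hrhs : 0 < ν * F * (11 * ν ^ 2 - ν - 1) := by
    have : 0 < F := by nlinarith
    positivity
  rw [← sqrt_sq (by positivity : 0 ≤ ν + 1), ← sqrt_mul (by norm_num),
    ← sqrt_mul (by positivity), sqrt_lt' hrhs]
  nlinarith [mul_le_mul_of_nonneg_left (six_mul_sq_mul_le_sq hν.le) (sq_nonneg (ν + 1)),
    mul_lt_mul_of_pos_right hFsq (pow_pos ha 2)]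

theorem subshock_quadratic_neg_at_critical {F ν : ℝ} (hν : 1 < ν) (hF : ν + 1 < F * ν ^ 2) :
    let Hc := F * √(ν ^ 2 + ν + 1) / (√6 * ν * (ν + 1))
    ν ^ 2 * (ν + 1) * Hc ^ 2 + (ν + 1) * Hc + -(2 * F ^ 2 * ν ^ 2 / (ν + 1)) < 0 := by
  intro Hc
  have hν0 : 0 < ν := by linarith
  have hF0 : 0 < F := by nlinarith
  have hHc_sq : Hc ^ 2 = F ^ 2 * (ν ^ 2 + ν + 1) / (6 * ν ^ 2 * (ν + 1) ^ 2) := by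
    rw [div_pow, mul_pow, mul_pow, mul_pow, sq_sqrt (by positivity), sq_sqrt (by norm_num)]
  have hHc_lin : (ν + 1) ^ 2 * Hc < F ^ 2 * (11 * ν ^ 2 - ν - 1) / 6 := by
    have h6 : √6 ^ 2 = 6 := sq_sqrt (by norm_num)
    have : (ν + 1) ^ 2 * Hc = F * (ν + 1) * (√6 * √(ν ^ 2 + ν + 1)) / (6 * ν) := by
      simp only [Hc]; field_simp; exact h6.symm
    rw [this, div_lt_div_iff₀ (by positivity) (by norm_num)]
    nlinarith [mul_lt_mul_of_pos_left (sqrt_six_mul_lt hν hF) (by positivity : 0 < 6 * F)]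
  have hscaled : (ν + 1) * (ν ^ 2 * (ν + 1) * Hc ^ 2 + (ν + 1) * Hc
      + -(2 * F ^ 2 * ν ^ 2 / (ν + 1))) =
      F ^ 2 * (ν ^ 2 + ν + 1) / 6 + (ν + 1) ^ 2 * Hc - 2 * F ^ 2 * ν ^ 2 := by
    rw [hHc_sq]; field_simp; ring
  refine neg_of_mul_neg_right ?_ (by positivity : (0 : ℝ) ≤ ν + 1)
  rw [hscaled]; linarith

theorem Hstar_gt_Hc (F nu : ℝ) (hnu : 1 < nu)
    (hFlow : 1 / nu + 1 / nu ^ 2 < F) :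
    (-nu - 1 + Real.sqrt (8 * F ^ 2 * nu ^ 4 + nu ^ 2 + 2 * nu + 1)) /
        (2 * nu ^ 2 * (nu + 1)) >
      F * Real.sqrt (nu ^ 2 + nu + 1) / (Real.sqrt 6 * nu * (nu + 1)) := by
  have hν : 0 < nu := by linarith
  have hF : nu + 1 < F * nu ^ 2 := by
    rwa [show 1 / nu + 1 / nu ^ 2 = (nu + 1) / nu ^ 2 by field_simp,
      div_lt_iff₀ (by positivity)] at hFlow
  have hdisc : discrim (nu ^ 2 * (nu + 1)) (nu + 1) (-(2 * F ^ 2 * nu ^ 2 / (nu + 1))) =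
      8 * F ^ 2 * nu ^ 4 + nu ^ 2 + 2 * nu + 1 := by
    rw [discrim]; field_simp; ring
  have hroot := lt_quadratic_root_of_neg (by positivity) (subshock_quadratic_neg_at_critical hnu hF)
  rw [hdisc] at hroot
  convert hroot using 2 <;> ring
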